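/- arXiv:2502.07798 — 4 statements merged into one kernel-verified Lean document; each statement's English description precedes it below -/
import Mathlib

section
/- Suppose weights w_k, k = 0, ..., r-1, satisfy ∑_k w_k = 1 and w_k = c_k + O(h^{r-1}), where c_k are the linear constants satisfying ∑_k c_k (q_k^r)'(x_i) = (q_{r-1}^{2r-1})'(x_i). If the data come from a smooth function, then ∑_{k=0}^{r-1} w_k (q_k^r)'(x_i) = f(u)_x(x_i, t_n) + O(h^{2r-2}). -/
open Polynomial

namespace WSCA

noncomputable def tpoly (g : ℝ → ℝ) (z : ℝ) (n : ℕ) : ℝ[X] :=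
  ∑ m ∈ Finset.range n, C (iteratedDeriv m g z / m.factorial) * (X - C z) ^ m

lemma tpoly_degree_lt (g : ℝ → ℝ) (z : ℝ) (n : ℕ) :
    (tpoly g z n).degree < (n : WithBot ℕ) := by
  refine lt_of_le_of_lt (degree_sum_le _ _) ?_
  refine (Finset.sup_lt_iff (WithBot.bot_lt_coe n)).mpr ?_
  intro m hm
  refine lt_of_le_of_lt (degree_mul_le _ _) ?_
  have h1 : degree ((X - C z) ^ m) ≤ (m : WithBot ℕ) := by
    simpa using degree_pow_le (X - C z) m |>.trans (by simp [degree_X_sub_C])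
  refine lt_of_le_of_lt (add_le_add degree_C_le h1) ?_
  rw [zero_add]
  exact Nat.cast_lt.mpr (Finset.mem_range.mp hm)

lemma tpoly_eval (g : ℝ → ℝ) (z : ℝ) (n : ℕ) (x : ℝ) :
    (tpoly g z n).eval x
      = ∑ m ∈ Finset.range n, iteratedDeriv m g z / m.factorial * (x - z) ^ m := by
  simp [tpoly, eval_finset_sum]

lemma tpoly_deriv_eval (g : ℝ → ℝ) (z : ℝ) (n : ℕ) (hn : 2 ≤ n) :
    (derivative (tpoly g z n)).eval z = deriv g z := by
  rw [tpoly, derivative_sum, eval_finset_sum]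
  rw [Finset.sum_eq_single 1]
  · simp [iteratedDeriv_one]
  · intro m hm hm1
    rcases Nat.eq_zero_or_pos m with h0 | h0
    · subst h0; simp
    · have h2 : 2 ≤ m := by omega
      simp only [derivative_C_mul, derivative_pow, derivative_X_sub_C, eval_mul, eval_C,
        eval_pow, eval_sub, eval_X, sub_self, eval_one, mul_one, eval_natCast]
      rw [zero_pow (by omega : m - 1 ≠ 0)]
      ring
  · intro h
    exact absurd (Finset.mem_range.mpr (by omega : 1 < n)) h

lemma itDW_eq {g : ℝ → ℝ} (hg : ContDiff ℝ (⊤ : ℕ∞) g) {s : Set ℝ} (hs : UniqueDiffOn ℝ s)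
    {x : ℝ} (hx : x ∈ s) (m : ℕ) : iteratedDerivWithin m g s x = iteratedDeriv m g x := by
  have H : HasFTaylorSeriesUpToOn (m : ℕ∞) g (ftaylorSeriesWithin ℝ g Set.univ) Set.univ :=
    ((hg.of_le (by exact_mod_cast le_top) : ContDiff ℝ (m : ℕ) g).contDiffOn.ftaylorSeriesWithin uniqueDiffOn_univ)
  have H2 := (H.mono (Set.subset_univ s)).eq_iteratedFDerivWithin_of_uniqueDiffOn le_rfl hs hx
  rw [iteratedDerivWithin_eq_iteratedFDerivWithin, iteratedDeriv_eq_iteratedFDeriv, ← H2]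
  simp [ftaylorSeriesWithin, iteratedFDerivWithin_univ]

lemma iteratedDeriv_reflect {g : ℝ → ℝ} (hg : ContDiff ℝ (⊤ : ℕ∞) g) (c : ℝ) (m : ℕ) (y : ℝ) :
    iteratedDeriv m (fun t => g (c - t)) y = (-1 : ℝ) ^ m * iteratedDeriv m g (c - y) := by
  induction m generalizing y with
  | zero => simp
  | succ m ih =>
    have ih' : iteratedDeriv m (fun t => g (c - t))
        = fun y => (-1 : ℝ) ^ m * iteratedDeriv m g (c - y) := funext fun y => ih y
    have hd : Differentiable ℝ (iteratedDeriv m g) :=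
      hg.differentiable_iteratedDeriv m (by exact_mod_cast lt_top_iff_ne_top.mpr (by simp))
    rw [iteratedDeriv_succ, ih', iteratedDeriv_succ]
    have hdc : DifferentiableAt ℝ (fun y : ℝ => iteratedDeriv m g (c - y)) y :=
      (hd.differentiableAt).comp y ((differentiable_const c).sub differentiable_id).differentiableAt
    rw [deriv_const_mul _ hdc, deriv_comp_const_sub]
    ring

lemma one_sided {g : ℝ → ℝ} (hg : ContDiff ℝ (⊤ : ℕ∞) g) (z R : ℝ) (hR : 0 < R) (n : ℕ) (hn : 1 ≤ n)
    (M : ℝ) (hM : ∀ y ∈ Set.Icc z (z + R), |iteratedDeriv n g y| ≤ M) :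
    ∀ x ∈ Set.Icc z (z + R), |g x - (tpoly g z n).eval x| ≤ M * (x - z) ^ n := by
  intro x hx
  have hab : z ≤ z + R := by linarith
  have hUD : UniqueDiffOn ℝ (Set.Icc z (z + R)) := uniqueDiffOn_Icc (by linarith)
  have hzmem : z ∈ Set.Icc z (z + R) := Set.left_mem_Icc.mpr hab
  have hCD : ContDiffOn ℝ ((n - 1 : ℕ) + 1) g (Set.Icc z (z + R)) :=
    (hg.of_le (by exact WithTop.coe_le_coe.mpr le_top)).contDiffOn
  have hC : ∀ y ∈ Set.Icc z (z + R),
      ‖iteratedDerivWithin ((n - 1) + 1) g (Set.Icc z (z + R)) y‖ ≤ M := by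
    intro y hy
    rw [itDW_eq hg hUD hy, (by omega : n - 1 + 1 = n), Real.norm_eq_abs]
    exact hM y hy
  have hT := taylor_mean_remainder_bound hab hCD hx hC
  have hTeq : taylorWithinEval g (n - 1) (Set.Icc z (z + R)) z x = (tpoly g z n).eval x := by
    rw [taylor_within_apply, tpoly_eval, (by omega : n - 1 + 1 = n)]
    refine Finset.sum_congr rfl fun m hm => ?_
    rw [itDW_eq hg hUD hzmem]
    simp [smul_eq_mul]
    ring
  rw [hTeq, Real.norm_eq_abs] at hT
  refine hT.trans ?_
  rw [(by omega : n - 1 + 1 = n)]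
  have hM0 : 0 ≤ M := le_trans (abs_nonneg _) (hM z hzmem)
  have hxz : 0 ≤ x - z := by linarith [hx.1]
  have : (0:ℝ) ≤ M * (x - z) ^ n := by positivity
  refine div_le_self this ?_
  exact_mod_cast Nat.one_le_iff_ne_zero.mpr (Nat.factorial_ne_zero _)

lemma taylor_bound {g : ℝ → ℝ} (hg : ContDiff ℝ (⊤ : ℕ∞) g) (z R : ℝ) (hR : 0 < R) (n : ℕ)
    (hn : 1 ≤ n) :
    ∃ M : ℝ, 0 ≤ M ∧ ∀ x : ℝ, |x - z| ≤ R →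
      |g x - (tpoly g z n).eval x| ≤ M * |x - z| ^ n := by
  -- bound on the n-th derivative on the symmetric interval
  have hcont : ContinuousOn (iteratedDeriv n g) (Set.Icc (z - R) (z + R)) :=
    (hg.continuous_iteratedDeriv n (by exact_mod_cast le_top)).continuousOn
  obtain ⟨M, hMb⟩ := (isCompact_Icc (a := z - R) (b := z + R)).exists_bound_of_continuousOn hcont
  have hM0 : 0 ≤ M := le_trans (norm_nonneg _) (hMb z (by constructor <;> linarith))
  refine ⟨M, hM0, fun x hx => ?_⟩
  have habs : ∀ y, y ∈ Set.Icc (z - R) (z + R) → |iteratedDeriv n g y| ≤ M := by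
    intro y hy; simpa [Real.norm_eq_abs] using hMb y hy
  rcases le_or_gt z x with hzx | hzx
  · have := one_sided hg z R hR n hn M
      (fun y hy => habs y ⟨by linarith [hy.1], hy.2⟩) x ⟨hzx, by
        have := abs_le.mp hx; linarith [this.1, this.2]⟩
    rwa [abs_of_nonneg (by linarith : (0:ℝ) ≤ x - z)]
  · -- reflection
    set g₂ : ℝ → ℝ := fun t => g (2 * z - t) with hg₂def
    have hg₂ : ContDiff ℝ (⊤ : ℕ∞) g₂ :=
      hg.comp ((contDiff_const (c := 2 * z)).sub contDiff_id)
    have hM₂ : ∀ y ∈ Set.Icc z (z + R), |iteratedDeriv n g₂ y| ≤ M := by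
      intro y hy
      rw [iteratedDeriv_reflect hg (2 * z) n y, abs_mul, abs_pow, abs_neg, abs_one, one_pow,
        one_mul]
      exact habs _ ⟨by linarith [hy.2], by linarith [hy.1]⟩
    have hx' : 2 * z - x ∈ Set.Icc z (z + R) := by
      have := abs_le.mp hx
      constructor <;> linarith [this.1, this.2]
    have hb := one_sided hg₂ z R hR n hn M hM₂ (2 * z - x) hx'
    have he1 : g₂ (2 * z - x) = g x := by simp [hg₂def]
    have he2 : (tpoly g₂ z n).eval (2 * z - x) = (tpoly g z n).eval x := by
      rw [tpoly_eval, tpoly_eval]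
      refine Finset.sum_congr rfl fun m hm => ?_
      rw [iteratedDeriv_reflect hg (2 * z) m z, (by ring : 2 * z - z = z)]
      have key : ((-1 : ℝ)) ^ m * (2 * z - x - z) ^ m = (x - z) ^ m := by
        rw [← mul_pow]; ring_nf
      linear_combination (iteratedDeriv m g z / m.factorial) * key
    rw [he1, he2] at hb
    refine hb.trans (le_of_eq ?_)
    rw [abs_of_nonpos (by linarith : x - z ≤ 0)]
    ring_nf

lemma inj_nodes (z h : ℝ) (hh : h ≠ 0) (S : Finset ℤ) :
    Set.InjOn (fun j : ℤ => z + (j : ℝ) * h) S := by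
  intro a _ b _ hab
  simp only [add_right_inj] at hab
  have : (a : ℝ) = b := mul_right_cancel₀ hh hab
  exact_mod_cast this

lemma inj_nodes1 (z : ℝ) (S : Finset ℤ) :
    Set.InjOn (fun j : ℤ => z + (j : ℝ)) S := by
  intro a _ b _ hab
  simp only [add_right_inj] at hab
  exact_mod_cast hab

/-- Scaling: the interpolant on nodes `z + j*h` is the interpolant on nodes `z + j`
composed with the affine map `x ↦ z + (x-z)/h`. -/

lemma interp_scale (S : Finset ℤ) (z h : ℝ) (hh : h ≠ 0) (e : ℤ → ℝ) :
    Lagrange.interpolate S (fun j : ℤ => z + (j : ℝ) * h) e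
      = (Lagrange.interpolate S (fun j : ℤ => z + (j : ℝ)) e).comp
          (C h⁻¹ * X + C (z - h⁻¹ * z)) := by
  set P₁ := Lagrange.interpolate S (fun j : ℤ => z + (j : ℝ)) e with hP₁
  set φ : ℝ[X] := C h⁻¹ * X + C (z - h⁻¹ * z) with hφ
  refine (Lagrange.eq_interpolate_of_eval_eq e (inj_nodes z h hh S) ?_ ?_).symm
  · -- degree
    rcases eq_or_ne P₁ 0 with h0 | h0
    · rw [h0, zero_comp, degree_zero]
      exact WithBot.bot_lt_coe _
    · have hd1 : P₁.degree < S.card := Lagrange.degree_interpolate_lt e (inj_nodes1 z S)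
      have hn1 : P₁.natDegree < S.card := (natDegree_lt_iff_degree_lt h0).mpr hd1
      calc (P₁.comp φ).degree ≤ ((P₁.comp φ).natDegree : WithBot ℕ) := degree_le_natDegree
        _ = ((P₁.natDegree * φ.natDegree : ℕ) : WithBot ℕ) := by rw [natDegree_comp]
        _ ≤ (P₁.natDegree : WithBot ℕ) := by
            rw [natDegree_linear (inv_ne_zero hh)]
            simp
        _ < (S.card : WithBot ℕ) := Nat.cast_lt.mpr hn1
  · intro i hi
    rw [eval_comp]
    have hφv : φ.eval (z + (i : ℝ) * h) = z + (i : ℝ) := by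
      simp [hφ]
      field_simp
      ring
    rw [hφv, hP₁, Lagrange.eval_interpolate_at_node e (inj_nodes1 z S) hi]

lemma deriv_interp_scale (S : Finset ℤ) (z h : ℝ) (hh : h ≠ 0) (e : ℤ → ℝ) :
    (derivative (Lagrange.interpolate S (fun j : ℤ => z + (j : ℝ) * h) e)).eval z
      = h⁻¹ * (derivative (Lagrange.interpolate S (fun j : ℤ => z + (j : ℝ)) e)).eval z := by
  rw [interp_scale S z h hh e, derivative_comp, eval_mul, eval_comp]
  have h1 : (C h⁻¹ * X + C (z - h⁻¹ * z)).eval z = z := by simp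
  have h2 : (derivative (C h⁻¹ * X + C (z - h⁻¹ * z))).eval z = h⁻¹ := by
    simp [derivative_C_mul_X]
  rw [h1, h2]

lemma interp_deriv_bound (S : Finset ℤ) (z : ℝ) :
    ∃ K : ℝ, 0 ≤ K ∧ ∀ (e : ℤ → ℝ) (B : ℝ), (∀ j ∈ S, |e j| ≤ B) →
      |(derivative (Lagrange.interpolate S (fun j : ℤ => z + (j : ℝ)) e)).eval z| ≤ K * B := by
  classical
  refine ⟨∑ j ∈ S, |(derivative (Lagrange.basis S (fun j : ℤ => z + (j : ℝ)) j)).eval z|,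
    Finset.sum_nonneg fun j _ => abs_nonneg _, fun e B hB => ?_⟩
  rw [Lagrange.interpolate_apply, derivative_sum, eval_finset_sum, Finset.sum_mul]
  refine (Finset.abs_sum_le_sum_abs _ _).trans (Finset.sum_le_sum fun j hj => ?_)
  rw [derivative_C_mul, eval_mul, eval_C, abs_mul, mul_comm]
  exact mul_le_mul_of_nonneg_left (hB j hj) (abs_nonneg _)

/-- MAIN: derivative of the interpolant at `z` approximates `deriv g z` to order `n-1`. -/
lemma main {g : ℝ → ℝ} (hg : ContDiff ℝ (⊤ : ℕ∞) g) (z : ℝ) (S : Finset ℤ) (n : ℕ)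
    (hcard : S.card = n) (hn : 2 ≤ n) :
    ∃ C : ℝ, 0 ≤ C ∧ ∀ h : ℝ, 0 < h → h < 1 →
      |(derivative (Lagrange.interpolate S (fun j : ℤ => z + (j : ℝ) * h)
          (fun j : ℤ => g (z + (j : ℝ) * h)))).eval z - deriv g z| ≤ C * h ^ (n - 1) := by
  classical
  set R : ℝ := 1 + ∑ j ∈ S, |(j : ℝ)| with hRdef
  have hR : 0 < R := by
    have : (0:ℝ) ≤ ∑ j ∈ S, |(j : ℝ)| := Finset.sum_nonneg fun j _ => abs_nonneg _
    linarith
  have hjR : ∀ j ∈ S, |(j : ℝ)| ≤ R := by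
    intro j hj
    have := Finset.single_le_sum (f := fun j : ℤ => |(j : ℝ)|) (fun i _ => abs_nonneg _) hj
    linarith
  obtain ⟨M, hM0, hM⟩ := taylor_bound hg z R hR n (by omega)
  obtain ⟨K, hK0, hK⟩ := interp_deriv_bound S z
  refine ⟨K * (M * R ^ n), by positivity, fun h h0 h1 => ?_⟩
  have hh : h ≠ 0 := ne_of_gt h0
  set P := tpoly g z n with hP
  set ev : ℤ → ℝ := fun j => g (z + (j : ℝ) * h) - P.eval (z + (j : ℝ) * h) with hev
  have hsplit : (fun j : ℤ => g (z + (j : ℝ) * h))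
      = (fun j : ℤ => P.eval (z + (j : ℝ) * h)) + ev := by
    funext j; simp [hev]
  have hPdeg : P.degree < (S.card : WithBot ℕ) := by
    rw [hcard]; exact tpoly_degree_lt g z n
  have hPinterp : Lagrange.interpolate S (fun j : ℤ => z + (j : ℝ) * h)
      (fun j : ℤ => P.eval (z + (j : ℝ) * h)) = P := by
    exact (Lagrange.eq_interpolate (inj_nodes z h hh S) (by exact_mod_cast hPdeg)).symm
  have hdecomp : Lagrange.interpolate S (fun j : ℤ => z + (j : ℝ) * h)
        (fun j : ℤ => g (z + (j : ℝ) * h))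
      = P + Lagrange.interpolate S (fun j : ℤ => z + (j : ℝ) * h) ev := by
    rw [hsplit, map_add, hPinterp]
  rw [hdecomp, derivative_add, eval_add, tpoly_deriv_eval g z n hn]
  rw [add_sub_cancel_left]
  rw [deriv_interp_scale S z h hh ev]
  have hB : ∀ j ∈ S, |ev j| ≤ M * (R * h) ^ n := by
    intro j hj
    have hd : |(z + (j : ℝ) * h) - z| ≤ R := by
      rw [add_sub_cancel_left, abs_mul, abs_of_pos h0]
      calc |(j : ℝ)| * h ≤ R * 1 := by
            apply mul_le_mul (hjR j hj) (le_of_lt h1) (le_of_lt h0) (le_of_lt hR)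
        _ = R := mul_one R
    have := hM (z + (j : ℝ) * h) hd
    refine this.trans ?_
    apply mul_le_mul_of_nonneg_left _ hM0
    apply pow_le_pow_left₀ (abs_nonneg _)
    rw [add_sub_cancel_left, abs_mul, abs_of_pos h0]
    exact mul_le_mul_of_nonneg_right (hjR j hj) (le_of_lt h0)
  have hE := hK ev (M * (R * h) ^ n) hB
  rw [abs_mul, abs_of_pos (inv_pos.mpr h0)]
  calc h⁻¹ * |(derivative (Lagrange.interpolate S (fun j : ℤ => z + (j : ℝ)) ev)).eval z|
      ≤ h⁻¹ * (K * (M * (R * h) ^ n)) := by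
        apply mul_le_mul_of_nonneg_left hE (le_of_lt (inv_pos.mpr h0))
    _ = K * (M * R ^ n) * h ^ (n - 1) := by
        rw [mul_pow]
        have hpow : h ^ n = h * h ^ (n - 1) := by
          rw [← pow_succ']; congr 1; omega
        rw [hpow]
        field_simp

end WSCA

open WSCA

/-- Equispaced stencils around `z = x_i`, smooth data `g = f(u(·,t_n))`.
Let `c k` be the linear constants satisfying
`∑_k c_k (q_k^r)'(z) = (q_{r-1}^{2r-1})'(z)` for all `h`, and suppose the (possibly
`h`-dependent) weights `w` satisfy `∑_k w_k = 1` and `w_k = c_k + O(h^{r-1})`.  Then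
`∑_{k=0}^{r-1} w_k (q_k^r)'(z) = g'(z) + O(h^{2r-2})`. -/
theorem weighted_substencil_combination_accuracy
    (f : ℝ → ℝ) (u : ℝ → ℝ → ℝ) (tn : ℝ)
    (hf : ContDiff ℝ (⊤ : ℕ∞) f)
    (hu : ContDiff ℝ (⊤ : ℕ∞) (fun p : ℝ × ℝ => u p.1 p.2))
    (r : ℕ) (hr : 1 ≤ r) (z : ℝ)
    (g : ℝ → ℝ) (hg : g = fun y => f (u y tn))
    (qd : ℝ → ℕ → ℝ)
    (hqd : ∀ h : ℝ, ∀ k : ℕ, qd h k =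
      (Polynomial.derivative
        (Lagrange.interpolate (Finset.Icc ((k : ℤ) - r + 1) (k : ℤ))
          (fun j : ℤ => z + (j : ℝ) * h) (fun j : ℤ => g (z + (j : ℝ) * h)))).eval z)
    (c : ℕ → ℝ)
    (hc : ∀ h : ℝ, 0 < h →
      ∑ k ∈ Finset.range r, c k * qd h k =
        (Polynomial.derivative
          (Lagrange.interpolate (Finset.Icc (-(r : ℤ) + 1) ((r : ℤ) - 1))
            (fun j : ℤ => z + (j : ℝ) * h) (fun j : ℤ => g (z + (j : ℝ) * h)))).eval z)
    (w : ℝ → ℕ → ℝ)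
    (hwsum : ∀ h : ℝ, 0 < h → ∑ k ∈ Finset.range r, w h k = 1)
    (hwc : ∃ C : ℝ, ∀ h : ℝ, 0 < h → ∀ k < r, |w h k - c k| ≤ C * h ^ (r - 1)) :
    ∃ C : ℝ, ∃ h₀ > 0, ∀ h : ℝ, 0 < h → h < h₀ →
      |(∑ k ∈ Finset.range r, w h k * qd h k) - deriv g z| ≤ C * h ^ (2 * r - 2) := by
  have hgs : ContDiff ℝ (⊤ : ℕ∞) g := by
    rw [hg]
    exact hf.comp (hu.comp ((contDiff_id (E := ℝ)).prodMk contDiff_const))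
  rcases eq_or_lt_of_le hr with hr1 | hr2
  · -- r = 1
    subst hr1
    refine ⟨|deriv g z| + 1, 1, one_pos, fun h h0 h1 => ?_⟩
    have hq0 : qd h 0 = 0 := by
      rw [hqd h 0]
      norm_num [Finset.Icc_self, Lagrange.interpolate_singleton]
    rw [Finset.sum_range_one, hq0, mul_zero]
    have he : (2 * 1 - 2 : ℕ) = 0 := by norm_num
    rw [he, pow_zero, mul_one, zero_sub, abs_neg]
    linarith [abs_nonneg (deriv g z)]
  · -- r ≥ 2
    have hr2' : 2 ≤ r := hr2
    obtain ⟨C1, hC1⟩ := hwc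
    have hC1nn : 0 ≤ C1 := by
      have := hC1 1 one_pos 0 (by omega)
      have h2 : (0:ℝ) ≤ C1 * 1 ^ (r - 1) := le_trans (abs_nonneg _) this
      simpa using h2
    -- substencil accuracy
    have hksub : ∀ k : ℕ, ∃ C : ℝ, 0 ≤ C ∧ ∀ h : ℝ, 0 < h → h < 1 →
        |qd h k - deriv g z| ≤ C * h ^ (r - 1) := by
      intro k
      have hcard : (Finset.Icc ((k : ℤ) - r + 1) (k : ℤ)).card = r := by
        rw [Int.card_Icc]; omega
      obtain ⟨C, hC0, hC⟩ := main hgs z _ r hcard hr2'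
      exact ⟨C, hC0, fun h h0 h1 => by rw [hqd h k]; exact hC h h0 h1⟩
    choose C2 hC2nn hC2 using hksub
    -- full stencil accuracy
    have hcardF : (Finset.Icc (-(r : ℤ) + 1) ((r : ℤ) - 1)).card = 2 * r - 1 := by
      rw [Int.card_Icc]; omega
    obtain ⟨C3, hC30, hC3⟩ := main hgs z _ (2 * r - 1) hcardF (by omega)
    have hC3' : ∀ h : ℝ, 0 < h → h < 1 →
        |(∑ k ∈ Finset.range r, c k * qd h k) - deriv g z| ≤ C3 * h ^ (2 * r - 2) := by
      intro h h0 h1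
      rw [hc h h0]
      have := hC3 h h0 h1
      have he : 2 * r - 1 - 1 = 2 * r - 2 := by omega
      rwa [he] at this
    -- sum of c equals 1
    set sC : ℝ := ∑ k ∈ Finset.range r, c k with hsC
    have hb : ∀ h : ℝ, 0 < h → |1 - sC| ≤ (r * C1) * h ^ (r - 1) := by
      intro h h0
      have h1 : 1 - sC = ∑ k ∈ Finset.range r, (w h k - c k) := by
        rw [Finset.sum_sub_distrib, hwsum h h0]
      rw [h1]
      refine (Finset.abs_sum_le_sum_abs _ _).trans ?_
      calc ∑ k ∈ Finset.range r, |w h k - c k|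
          ≤ ∑ _k ∈ Finset.range r, C1 * h ^ (r - 1) :=
            Finset.sum_le_sum fun k hk => hC1 h h0 k (Finset.mem_range.mp hk)
        _ = (r * C1) * h ^ (r - 1) := by
            rw [Finset.sum_const, Finset.card_range, nsmul_eq_mul]; ring
    have hsC1 : sC = 1 := by
      have ht : Filter.Tendsto (fun h : ℝ => (r * C1) * h ^ (r - 1))
          (nhdsWithin 0 (Set.Ioi 0)) (nhds 0) := by
        have hcont : Filter.Tendsto (fun h : ℝ => (r * C1) * h ^ (r - 1)) (nhds 0)
            (nhds ((r * C1) * (0:ℝ) ^ (r - 1))) :=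
          (continuous_const.mul (continuous_pow (r - 1))).tendsto 0
        rw [zero_pow (by omega : r - 1 ≠ 0), mul_zero] at hcont
        exact hcont.mono_left nhdsWithin_le_nhds
      have hle : |1 - sC| ≤ 0 := by
        refine ge_of_tendsto ht ?_
        filter_upwards [self_mem_nhdsWithin] with h hh
        exact hb h hh
      have := abs_nonneg (1 - sC)
      have h0 : |1 - sC| = 0 := le_antisymm hle this
      have := abs_eq_zero.mp h0
      linarith
    -- final assembly
    refine ⟨C3 + C1 * ∑ k ∈ Finset.range r, C2 k, 1, one_pos, fun h h0 h1 => ?_⟩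
    have key : (∑ k ∈ Finset.range r, w h k * qd h k) - deriv g z
        = ((∑ k ∈ Finset.range r, c k * qd h k) - deriv g z)
          + ∑ k ∈ Finset.range r, (w h k - c k) * (qd h k - deriv g z) := by
      have e1 : ∑ k ∈ Finset.range r, (w h k - c k) * (qd h k - deriv g z)
          = (∑ k ∈ Finset.range r, w h k * qd h k)
            - (∑ k ∈ Finset.range r, c k * qd h k)
            - ((∑ k ∈ Finset.range r, w h k) - ∑ k ∈ Finset.range r, c k) * deriv g z := by
        simp only [sub_mul, mul_sub, Finset.sum_sub_distrib, Finset.sum_mul]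
      rw [e1, hwsum h h0, ← hsC, hsC1]
      ring
    rw [key]
    have hpowsplit : h ^ (r - 1) * h ^ (r - 1) = h ^ (2 * r - 2) := by
      rw [← pow_add]; congr 1; omega
    calc |((∑ k ∈ Finset.range r, c k * qd h k) - deriv g z)
          + ∑ k ∈ Finset.range r, (w h k - c k) * (qd h k - deriv g z)|
        ≤ |(∑ k ∈ Finset.range r, c k * qd h k) - deriv g z|
          + |∑ k ∈ Finset.range r, (w h k - c k) * (qd h k - deriv g z)| := abs_add_le _ _
      _ ≤ C3 * h ^ (2 * r - 2)
          + ∑ k ∈ Finset.range r, (C1 * h ^ (r - 1)) * (C2 k * h ^ (r - 1)) := by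
          refine add_le_add (hC3' h h0 h1) ?_
          refine (Finset.abs_sum_le_sum_abs _ _).trans (Finset.sum_le_sum fun k hk => ?_)
          rw [abs_mul]
          exact mul_le_mul (hC1 h h0 k (Finset.mem_range.mp hk))
            (hC2 k h h0 h1) (abs_nonneg _) (by positivity)
      _ = (C3 + C1 * ∑ k ∈ Finset.range r, C2 k) * h ^ (2 * r - 2) := by
          have : ∑ k ∈ Finset.range r, (C1 * h ^ (r - 1)) * (C2 k * h ^ (r - 1))
              = (∑ k ∈ Finset.range r, C2 k) * (C1 * (h ^ (r - 1) * h ^ (r - 1))) := by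
            rw [Finset.sum_mul]
            refine Finset.sum_congr rfl fun k hk => by ring
          rw [this, hpowsplit]
          ring
end

section
/- Let p_k and p_j be the cell-average reconstruction polynomials of degree ≤ r-1 on two substencils contained in a region where the underlying function g is smooth. Then for each derivative order ℓ ≥ 0, p_k^{(ℓ)}(x) - p_j^{(ℓ)}(x) = O(h^{r-ℓ}) uniformly for x in the central cell [x_{i-1/2}, x_{i+1/2}]. -/
open Polynomial intervalIntegral

lemma aux_contDiff_eval (p : Polynomial ℝ) : ContDiff ℝ (⊤:ℕ∞) fun x => p.eval x := by
  induction p using Polynomial.induction_on' with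
  | add p q hp hq => simpa [Polynomial.eval_add] using hp.add hq
  | monomial n a =>
    simp only [Polynomial.eval_monomial]
    exact contDiff_const.mul (contDiff_id.pow n)

open Polynomial intervalIntegral

lemma aux_iteratedDeriv_sub_poly (g : ℝ → ℝ) (hg : ContDiff ℝ (⊤ : ℕ∞) g) (T : Polynomial ℝ) (n : ℕ) :
    iteratedDeriv n (fun x => g x - T.eval x)
      = fun x => iteratedDeriv n g x - (derivative^[n] T).eval x := by
  induction n with
  | zero => simp
  | succ n ih =>
    rw [iteratedDeriv_succ, ih, iteratedDeriv_succ, Function.iterate_succ_apply']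
    funext x
    rw [deriv_fun_sub ((hg.differentiable_iteratedDeriv n (by exact_mod_cast WithTop.coe_lt_top _)).differentiableAt)
      (Polynomial.differentiableAt _)]
    simp [Polynomial.deriv]

lemma aux_taylor_bound (φ : ℝ → ℝ) (hφ : ContDiff ℝ (⊤ : ℕ∞) φ) (z R M : ℝ) (n : ℕ)
    (hvan : ∀ i < n, iteratedDeriv i φ z = 0)
    (hM : ∀ t ∈ Set.Icc (z - R) (z + R), |iteratedDeriv n φ t| ≤ M) :
    ∀ x ∈ Set.Icc (z - R) (z + R), |φ x| ≤ M * |x - z| ^ n := by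
  induction n generalizing φ with
  | zero => intro x hx; simpa using hM x hx
  | succ n ih =>
    have hψ : ContDiff ℝ (⊤ : ℕ∞) (deriv φ) := by
      have := hφ.iterate_deriv 1
      simpa using this
    have key : ∀ x ∈ Set.Icc (z - R) (z + R), |deriv φ x| ≤ M * |x - z| ^ n := by
      apply ih _ hψ
      · intro i hi
        rw [← iteratedDeriv_succ']
        exact hvan (i + 1) (by omega)
      · intro t ht
        rw [← iteratedDeriv_succ']
        exact hM t ht
    intro x hx
    have hφz : φ z = 0 := hvan 0 (by omega)
    have hftc : φ x - φ z = ∫ t in z..x, deriv φ t := by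
      rw [intervalIntegral.integral_deriv_eq_sub]
      · intro t _
        exact (hφ.differentiable (by simp)).differentiableAt
      · exact ((hψ.continuous).intervalIntegrable _ _)
    have hbound : ∀ t ∈ Set.uIoc z x, ‖deriv φ t‖ ≤ M * |x - z| ^ n := by
      intro t ht
      have ht' : t ∈ Set.uIcc z x := Set.Ioc_subset_Icc_self ht
      have htz : |t - z| ≤ |x - z| := by
        rcases Set.mem_uIcc.mp ht' with h | h
        · rw [abs_of_nonneg (by linarith [h.1]), abs_of_nonneg (by linarith [h.1, h.2])]
          linarith [h.2]
        · rw [abs_of_nonpos (by linarith [h.2]), abs_of_nonpos (by linarith [h.1, h.2])]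
          linarith [h.1]
      have htIcc : t ∈ Set.Icc (z - R) (z + R) := by
        rcases Set.mem_uIcc.mp ht' with h | h <;>
          constructor <;> nlinarith [hx.1, hx.2, h.1, h.2]
      have := key t htIcc
      have hM0 : 0 ≤ M := le_trans (abs_nonneg _) (by simpa using hM z (by constructor <;> nlinarith [hx.1, hx.2]))
      calc ‖deriv φ t‖ = |deriv φ t| := rfl
        _ ≤ M * |t - z| ^ n := this
        _ ≤ M * |x - z| ^ n := by
            apply mul_le_mul_of_nonneg_left _ hM0
            exact pow_le_pow_left₀ (abs_nonneg _) htz n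
    have := intervalIntegral.norm_integral_le_of_norm_le_const hbound
    rw [← hftc] at this
    have hxz : |x - z| ^ n * |x - z| = |x - z| ^ (n + 1) := (pow_succ _ _).symm
    calc |φ x| = ‖φ x - φ z‖ := by rw [hφz, sub_zero]; rfl
      _ ≤ M * |x - z| ^ n * |x - z| := this
      _ = M * |x - z| ^ (n + 1) := by rw [mul_assoc, hxz]

/-- cell integral of a poly of natDegree < r equals matrix times coeff vector -/
lemma aux_cell_integral_eq (r : ℕ) (p : Polynomial ℝ) (hp : p.natDegree < r) (a b : ℝ) :
    ∫ t in a..b, p.eval t = ∑ n ∈ Finset.range r, p.coeff n * ∫ t in a..b, t ^ n := by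
  have : ∀ t : ℝ, p.eval t = ∑ n ∈ Finset.range r, p.coeff n * t ^ n := fun t =>
    Polynomial.eval_eq_sum_range' hp t
  rw [intervalIntegral.integral_congr (g := fun t => ∑ n ∈ Finset.range r, p.coeff n * t ^ n)
    (fun t _ => this t)]
  rw [intervalIntegral.integral_finset_sum]
  · exact Finset.sum_congr rfl fun n _ => intervalIntegral.integral_const_mul _ _
  · intro n _
    exact ((continuous_const.mul (continuous_pow n))).intervalIntegrable _ _

/-- a continuous function with zero integral on an interval has a root inside -/
lemma aux_root_of_zero_integral (f : ℝ → ℝ) (hf : Continuous f) (a b : ℝ) (hab : a < b)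
    (h0 : (∫ t in a..b, f t) = 0) : ∃ t ∈ Set.Ioo a b, f t = 0 := by
  by_contra hc
  push_neg at hc
  by_cases hpos : ∃ t ∈ Set.Ioo a b, 0 < f t
  · by_cases hneg : ∃ t ∈ Set.Ioo a b, f t < 0
    · obtain ⟨t₁, ht₁, hft₁⟩ := hpos
      obtain ⟨t₂, ht₂, hft₂⟩ := hneg
      have hsub : Set.uIcc t₁ t₂ ⊆ Set.Ioo a b :=
        Set.ordConnected_Ioo.uIcc_subset ht₁ ht₂
      have h0mem : (0 : ℝ) ∈ Set.uIcc (f t₁) (f t₂) :=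
        Set.mem_uIcc.mpr (Or.inr ⟨le_of_lt hft₂, le_of_lt hft₁⟩)
      obtain ⟨x, hx, hfx⟩ := intermediate_value_uIcc (hf.continuousOn) h0mem
      exact hc x (hsub hx) hfx
    · push_neg at hneg
      have hpos' : ∀ t ∈ Set.Ioo a b, 0 < f t := fun t ht =>
        lt_of_le_of_ne (hneg t ht) (Ne.symm (hc t ht))
      have := intervalIntegral.intervalIntegral_pos_of_pos_on
        ((hf.intervalIntegrable a b)) hpos' hab
      exact absurd h0 (ne_of_gt this)
  · push_neg at hpos
    have hneg' : ∀ t ∈ Set.Ioo a b, 0 < (-f) t := by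
      intro t ht
      simp only [Pi.neg_apply, neg_pos]
      exact lt_of_le_of_ne (hpos t ht) (hc t ht)
    have := intervalIntegral.intervalIntegral_pos_of_pos_on
      ((hf.neg.intervalIntegrable a b)) hneg' hab
    simp only [Pi.neg_apply] at this
    rw [intervalIntegral.integral_neg, h0, neg_zero] at this
    exact absurd this (lt_irrefl 0)

/-- quantitative inverse bound for the unit-grid cell-average map -/
lemma aux_inverse_bound (r : ℕ) (hr : 1 ≤ r) (b : ℤ) :
    ∃ C : ℝ, 0 ≤ C ∧ ∀ p : Polynomial ℝ, p.natDegree < r → ∀ ε : ℝ, 0 ≤ ε →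
      (∀ i : Fin r, |∫ t in ((b : ℝ) + i - 1/2)..((b : ℝ) + i + 1/2), p.eval t| ≤ ε) →
      ∀ n : Fin r, |p.coeff n| ≤ C * ε := by
  haveI : Nonempty (Fin r) := ⟨⟨0, hr⟩⟩
  set M : Matrix (Fin r) (Fin r) ℝ :=
    fun i n => ∫ t in ((b : ℝ) + i - 1/2)..((b : ℝ) + i + 1/2), t ^ (n : ℕ) with hM
  set Φ : (Fin r → ℝ) →ₗ[ℝ] (Fin r → ℝ) := Matrix.toLin' M with hΦ
  -- relation : for p of natDegree < r, Φ (coeffs p) = cell integrals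
  have hrel : ∀ p : Polynomial ℝ, p.natDegree < r → ∀ i : Fin r,
      Φ (fun n : Fin r => p.coeff n) i
        = ∫ t in ((b : ℝ) + i - 1/2)..((b : ℝ) + i + 1/2), p.eval t := by
    intro p hp i
    rw [hΦ, Matrix.toLin'_apply]
    show (∑ n : Fin r, M i n * p.coeff n) = _
    rw [aux_cell_integral_eq r p hp]
    rw [Finset.sum_range fun n => p.coeff n * ∫ t in ((b:ℝ)+i-1/2)..((b:ℝ)+i+1/2), t ^ n]
    exact Finset.sum_congr rfl fun n _ => by rw [mul_comm]
  -- injectivity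
  have hinj : Function.Injective Φ := by
    rw [← LinearMap.ker_eq_bot, LinearMap.ker_eq_bot']
    intro c hc
    set p : Polynomial ℝ := ∑ n : Fin r, Polynomial.C (c n) * Polynomial.X ^ (n : ℕ) with hpdef
    have hcoeff : ∀ n : Fin r, p.coeff n = c n := by
      intro n
      rw [hpdef, Polynomial.finset_sum_coeff]
      rw [Finset.sum_eq_single n]
      · simp
      · intro m _ hmn
        rw [Polynomial.coeff_C_mul, Polynomial.coeff_X_pow]
        simp only [mul_ite, mul_one, mul_zero, ite_eq_right_iff]
        intro hmm
        exact absurd (Fin.val_injective hmm).symm hmn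
      · simp
    have hdeg : p.natDegree < r := by
      have : p.natDegree ≤ r - 1 := by
        apply Polynomial.natDegree_sum_le_of_forall_le
        intro n _
        refine le_trans (Polynomial.natDegree_C_mul_le _ _) ?_
        rw [Polynomial.natDegree_X_pow]
        omega
      omega
    have hzero : ∀ i : Fin r, (∫ t in ((b : ℝ) + i - 1/2)..((b : ℝ) + i + 1/2), p.eval t) = 0 := by
      intro i
      rw [← hrel p hdeg i]
      have : (fun n : Fin r => p.coeff n) = c := funext hcoeff
      rw [this, hc]
      rfl
    -- roots
    have hroot : ∀ i : Fin r, ∃ t ∈ Set.Ioo ((b:ℝ) + i - 1/2) ((b:ℝ) + i + 1/2), p.eval t = 0 :=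
      fun i => aux_root_of_zero_integral _ (Polynomial.continuous p) _ _ (by linarith) (hzero i)
    choose t ht hpt using hroot
    have htinj : Function.Injective t := by
      intro i j hij
      by_contra hne
      rcases lt_or_gt_of_ne (fun h : (i:ℕ) = (j:ℕ) => hne (Fin.val_injective h)) with h | h
      · have h1 : t i < (b:ℝ) + i + 1/2 := (ht i).2
        have h2 : (b:ℝ) + j - 1/2 < t j := (ht j).1
        have : (i:ℝ) + 1 ≤ (j:ℝ) := by exact_mod_cast h
        have : t i < t j := by linarith
        exact absurd hij (ne_of_lt this)
      · have h1 : t j < (b:ℝ) + j + 1/2 := (ht j).2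
        have h2 : (b:ℝ) + i - 1/2 < t i := (ht i).1
        have : (j:ℝ) + 1 ≤ (i:ℝ) := by exact_mod_cast h
        have : t j < t i := by linarith
        exact absurd hij.symm (ne_of_lt this)
    have hp0 : p = 0 := by
      apply Polynomial.eq_zero_of_natDegree_lt_card_of_eval_eq_zero p htinj hpt
      rw [Fintype.card_fin]; exact hdeg
    funext n
    rw [← hcoeff n, hp0]
    simp
  have hsurj : Function.Surjective Φ := (LinearMap.injective_iff_surjective).mp hinj
  set e : (Fin r → ℝ) ≃ₗ[ℝ] (Fin r → ℝ) := LinearEquiv.ofBijective Φ ⟨hinj, hsurj⟩ with he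
  set L := LinearMap.toContinuousLinearMap (e.symm.toLinearMap) with hL
  refine ⟨‖L‖, norm_nonneg _, ?_⟩
  intro p hp ε hε hint n
  set c : Fin r → ℝ := fun n : Fin r => p.coeff n with hc
  set v : Fin r → ℝ := Φ c with hv
  have hcv : c = e.symm v := by
    rw [hv]
    have : Φ c = e c := rfl
    rw [this, LinearEquiv.symm_apply_apply]
  have hnormv : ‖v‖ ≤ ε := by
    rw [pi_norm_le_iff_of_nonneg hε]
    intro i
    rw [hv]
    show ‖Φ c i‖ ≤ ε
    rw [Real.norm_eq_abs, hrel p hp i]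
    exact hint i
  have : ‖c‖ ≤ ‖L‖ * ε := by
    calc ‖c‖ = ‖L v‖ := by rw [hcv]; rfl
      _ ≤ ‖L‖ * ‖v‖ := L.le_opNorm v
      _ ≤ ‖L‖ * ε := mul_le_mul_of_nonneg_left hnormv (norm_nonneg _)
  calc |p.coeff n| = ‖c n‖ := rfl
    _ ≤ ‖c‖ := norm_le_pi_norm c n
    _ ≤ ‖L‖ * ε := this

noncomputable def auxT (g : ℝ → ℝ) (z : ℝ) (r : ℕ) : Polynomial ℝ :=
  ∑ n ∈ Finset.range r, Polynomial.C (iteratedDeriv n g z / n.factorial) *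
    (Polynomial.X - Polynomial.C z) ^ n

lemma auxT_natDegree (g : ℝ → ℝ) (z : ℝ) (r : ℕ) (hr : 1 ≤ r) :
    (auxT g z r).natDegree ≤ r - 1 := by
  apply Polynomial.natDegree_sum_le_of_forall_le
  intro n hn
  refine le_trans (Polynomial.natDegree_C_mul_le _ _) ?_
  refine le_trans (Polynomial.natDegree_pow_le) ?_
  have : (Polynomial.X - Polynomial.C z).natDegree ≤ 1 := by
    apply le_trans (Polynomial.natDegree_sub_le _ _)
    simp
  have hn' : n ≤ r - 1 := by
    have := Finset.mem_range.mp hn; omega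
  calc n * (Polynomial.X - Polynomial.C z).natDegree ≤ n * 1 := Nat.mul_le_mul_left n this
    _ = n := Nat.mul_one n
    _ ≤ r - 1 := hn'

lemma auxT_deriv_eval (g : ℝ → ℝ) (z : ℝ) (r i : ℕ) (hi : i < r) :
    (derivative^[i] (auxT g z r)).eval z = iteratedDeriv i g z := by
  rw [auxT, Polynomial.iterate_derivative_sum, Polynomial.eval_finset_sum]
  have hterm : ∀ n ∈ Finset.range r,
      (derivative^[i] (Polynomial.C (iteratedDeriv n g z / n.factorial) *
        (Polynomial.X - Polynomial.C z) ^ n)).eval z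
        = if n = i then iteratedDeriv i g z else 0 := by
    intro n _
    rw [Polynomial.iterate_derivative_C_mul, Polynomial.iterate_derivative_X_sub_pow]
    rw [Polynomial.eval_mul, Polynomial.eval_C, Polynomial.eval_smul]
    rw [Polynomial.eval_pow, Polynomial.eval_sub, Polynomial.eval_X, Polynomial.eval_C,
      sub_self]
    by_cases hni : n = i
    · subst hni
      rw [Nat.sub_self, pow_zero, if_pos rfl, Nat.descFactorial_self, nsmul_eq_mul, mul_one]
      field_simp
    · rw [if_neg hni]
      rcases Nat.lt_or_ge n i with h | h
      · rw [Nat.descFactorial_eq_zero_iff_lt.mpr h]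
        simp
      · have hpos : 0 < n - i := by omega
        rw [zero_pow (by omega), smul_zero, mul_zero]
  rw [Finset.sum_congr rfl hterm, Finset.sum_ite_eq' (Finset.range r) i]
  rw [if_pos (Finset.mem_range.mpr hi)]


/-- crude bound on derivatives of a polynomial via sup of coefficients -/
lemma aux_eval_deriv_bound (r ℓ : ℕ) (hr : 1 ≤ r) (p : Polynomial ℝ) (hp : p.natDegree < r)
    (A : ℝ) (hA : ∀ n : Fin r, |p.coeff n| ≤ A) (t : ℝ) (ht : |t| ≤ r) :
    |(derivative^[ℓ] p).eval t|
      ≤ (∑ n ∈ Finset.range r, ((n + ℓ).descFactorial ℓ : ℝ) * (r : ℝ) ^ n) * A := by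
  have hA0 : 0 ≤ A := le_trans (abs_nonneg _) (hA ⟨0, hr⟩)
  have hdeg : (derivative^[ℓ] p).natDegree < r :=
    lt_of_le_of_lt (le_trans (Polynomial.natDegree_iterate_derivative p ℓ) (Nat.sub_le _ _)) hp
  rw [Polynomial.eval_eq_sum_range' hdeg t]
  refine le_trans (Finset.abs_sum_le_sum_abs _ _) ?_
  rw [Finset.sum_mul]
  apply Finset.sum_le_sum
  intro n hn
  rw [Polynomial.coeff_iterate_derivative]
  have hcoeff : |p.coeff (n + ℓ)| ≤ A := by
    by_cases h : n + ℓ < r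
    · exact hA ⟨n + ℓ, h⟩
    · rw [Polynomial.coeff_eq_zero_of_natDegree_lt (by omega)]
      simpa using hA0
  have habs : |((n + ℓ).descFactorial ℓ • p.coeff (n + ℓ)) * t ^ n|
      = ((n + ℓ).descFactorial ℓ : ℝ) * |p.coeff (n + ℓ)| * |t| ^ n := by
    rw [abs_mul, abs_pow, nsmul_eq_mul, abs_mul, Nat.abs_cast]
  rw [habs]
  have htn : |t| ^ n ≤ (r : ℝ) ^ n := pow_le_pow_left₀ (abs_nonneg _) ht n
  have h1 : ((n + ℓ).descFactorial ℓ : ℝ) * |p.coeff (n + ℓ)| * |t| ^ n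
      ≤ ((n + ℓ).descFactorial ℓ : ℝ) * A * (r : ℝ) ^ n := by
    apply mul_le_mul
    · exact mul_le_mul_of_nonneg_left hcoeff (by positivity)
    · exact htn
    · positivity
    · positivity
  linarith [h1]

/-- iterated derivative of composition with a linear polynomial -/
lemma aux_iterate_derivative_comp_linear (h z : ℝ) (s : Polynomial ℝ) (ℓ : ℕ) :
    derivative^[ℓ] (s.comp (Polynomial.C h * Polynomial.X + Polynomial.C z))
      = Polynomial.C (h ^ ℓ) *
        ((derivative^[ℓ] s).comp (Polynomial.C h * Polynomial.X + Polynomial.C z)) := by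
  induction ℓ with
  | zero => simp
  | succ ℓ ih =>
    rw [Function.iterate_succ_apply', ih, Polynomial.derivative_C_mul,
      Polynomial.derivative_comp]
    have hlin : derivative (Polynomial.C h * Polynomial.X + Polynomial.C z) = Polynomial.C h := by
      simp
    rw [hlin, Function.iterate_succ_apply', ← mul_assoc, ← Polynomial.C_mul,
      mul_comm (h ^ ℓ) h, ← pow_succ']

noncomputable def auxK (r ℓ : ℕ) : ℝ :=
  ∑ n ∈ Finset.range r, ((n + ℓ).descFactorial ℓ : ℝ) * (r : ℝ) ^ n

lemma auxK_nonneg (r ℓ : ℕ) : 0 ≤ auxK r ℓ := by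
  apply Finset.sum_nonneg; intro n _; positivity

lemma aux_main_est (r ℓ : ℕ) (hr : 1 ≤ r) (hℓ : ℓ < r) (z M : ℝ) (hM : 0 ≤ M)
    (T : Polynomial ℝ) (hTdeg : T.natDegree ≤ r - 1)
    (g : ℝ → ℝ) (hgc : Continuous g)
    (htay : ∀ x ∈ Set.Icc (z - r) (z + r), |g x - T.eval x| ≤ M * |x - z| ^ r)
    (c : ℤ) (hc : c ∈ Finset.Icc (0 : ℤ) ((r : ℤ) - 1))
    (CW : ℝ)
    (hCW : ∀ p : Polynomial ℝ, p.natDegree < r → ∀ ε : ℝ, 0 ≤ ε →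
      (∀ i : Fin r, |∫ t in (((c - r + 1 : ℤ) : ℝ) + i - 1/2)..(((c - r + 1 : ℤ) : ℝ) + i + 1/2),
        p.eval t| ≤ ε) →
      ∀ n : Fin r, |p.coeff n| ≤ CW * ε)
    (h : ℝ) (h0 : 0 < h) (h1 : h < 1)
    (W : Polynomial ℝ) (hWdeg : W.degree ≤ (r - 1 : ℕ))
    (hWavg : ∀ m ∈ Finset.Icc (c - r + 1) c,
      (1 / h) * ∫ x in (z + (m : ℝ) * h - h / 2)..(z + (m : ℝ) * h + h / 2), W.eval x
        = (1 / h) * ∫ x in (z + (m : ℝ) * h - h / 2)..(z + (m : ℝ) * h + h / 2), g x)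
    (x : ℝ) (hx : x ∈ Set.Icc (z - h / 2) (z + h / 2)) :
    |(derivative^[ℓ] (W - T)).eval x|
      ≤ auxK r ℓ * CW * M * (r : ℝ) ^ r * h ^ (r - ℓ) := by
  obtain ⟨hc0, hc1⟩ := Finset.mem_Icc.mp hc
  have hWnat : W.natDegree ≤ r - 1 := Polynomial.natDegree_le_iff_degree_le.mpr hWdeg
  have hWT : (W - T).natDegree ≤ r - 1 :=
    le_trans (Polynomial.natDegree_sub_le _ _) (max_le hWnat hTdeg)
  -- cell estimates
  have hcell : ∀ m : ℤ, m ∈ Finset.Icc (c - r + 1) c →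
      |∫ t in (z + (m : ℝ) * h - h / 2)..(z + (m : ℝ) * h + h / 2), (W - T).eval t|
        ≤ M * ((r : ℝ) * h) ^ r * h := by
    intro m hm
    obtain ⟨hm0, hm1⟩ := Finset.mem_Icc.mp hm
    have hmabs : |(m : ℝ)| ≤ (r : ℝ) - 1 := by
      rw [abs_le]
      have hA : (-((r:ℤ) - 1) : ℤ) ≤ m := by omega
      have hB : m ≤ (r : ℤ) - 1 := by omega
      have hA' : ((-((r:ℤ) - 1) : ℤ) : ℝ) ≤ (m : ℝ) := by exact_mod_cast hA
      have hB' : ((m : ℤ) : ℝ) ≤ (((r:ℤ) - 1 : ℤ) : ℝ) := by exact_mod_cast hB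
      push_cast at hA' hB'
      constructor <;> linarith
    have hintW : (∫ t in (z + (m : ℝ) * h - h / 2)..(z + (m : ℝ) * h + h / 2), W.eval t)
        = ∫ t in (z + (m : ℝ) * h - h / 2)..(z + (m : ℝ) * h + h / 2), g t :=
      mul_left_cancel₀ (one_div_ne_zero h0.ne') (hWavg m hm)
    have hiW : IntervalIntegrable (fun t => W.eval t) MeasureTheory.volume
        (z + (m : ℝ) * h - h / 2) (z + (m : ℝ) * h + h / 2) :=
      (Polynomial.continuous W).intervalIntegrable _ _
    have hiT : IntervalIntegrable (fun t => T.eval t) MeasureTheory.volume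
        (z + (m : ℝ) * h - h / 2) (z + (m : ℝ) * h + h / 2) :=
      (Polynomial.continuous T).intervalIntegrable _ _
    have hig : IntervalIntegrable g MeasureTheory.volume
        (z + (m : ℝ) * h - h / 2) (z + (m : ℝ) * h + h / 2) :=
      hgc.intervalIntegrable _ _
    have hsplit : (∫ t in (z + (m : ℝ) * h - h / 2)..(z + (m : ℝ) * h + h / 2), (W - T).eval t)
        = ∫ t in (z + (m : ℝ) * h - h / 2)..(z + (m : ℝ) * h + h / 2), (g t - T.eval t) := by
      have e1 : (fun t => (W - T).eval t) = fun t => W.eval t - T.eval t := by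
        funext t; simp
      rw [e1, intervalIntegral.integral_sub hiW hiT, hintW,
        ← intervalIntegral.integral_sub hig hiT]
    rw [hsplit]
    have hb : (∀ t ∈ Set.uIoc (z + (m : ℝ) * h - h / 2) (z + (m : ℝ) * h + h / 2),
        ‖g t - T.eval t‖ ≤ M * ((r : ℝ) * h) ^ r) := by
      intro t ht
      have hord : z + (m : ℝ) * h - h / 2 ≤ z + (m : ℝ) * h + h / 2 := by linarith
      rw [Set.uIoc_of_le hord] at ht
      have htz : |t - z| ≤ (r : ℝ) * h := by
        rw [abs_le]
        have h1' := ht.1.le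
        have h2' := ht.2
        have := abs_le.mp hmabs
        constructor <;> nlinarith [this.1, this.2]
      have htIcc : t ∈ Set.Icc (z - (r:ℝ)) (z + (r:ℝ)) := by
        have := abs_le.mp htz
        have hr1 : (r : ℝ) * h ≤ r := by
          have hr1R : (1:ℝ) ≤ (r:ℝ) := by exact_mod_cast hr
          nlinarith
        constructor <;> nlinarith [this.1, this.2]
      calc ‖g t - T.eval t‖ = |g t - T.eval t| := rfl
        _ ≤ M * |t - z| ^ r := htay t htIcc
        _ ≤ M * ((r : ℝ) * h) ^ r := by
            apply mul_le_mul_of_nonneg_left _ hM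
            exact pow_le_pow_left₀ (abs_nonneg _) htz r
    have := intervalIntegral.norm_integral_le_of_norm_le_const hb
    have hlen : |(z + (m : ℝ) * h + h / 2) - (z + (m : ℝ) * h - h / 2)| = h := by
      rw [abs_of_nonneg (by linarith)]; ring
    rw [hlen] at this
    exact this
  -- scaled polynomial
  set pB : Polynomial ℝ := (W - T).comp (Polynomial.C h * Polynomial.X + Polynomial.C z)
    with hpB
  have hpBdeg : pB.natDegree < r := by
    have h1' : pB.natDegree ≤ (W - T).natDegree * (Polynomial.C h * Polynomial.X +
        Polynomial.C z).natDegree := Polynomial.natDegree_comp_le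
    have h2' : (Polynomial.C h * Polynomial.X + Polynomial.C z).natDegree ≤ 1 :=
      Polynomial.natDegree_linear_le
    have := le_trans h1' (Nat.mul_le_mul (le_refl _) h2')
    omega
  set ε : ℝ := M * (r : ℝ) ^ r * h ^ r with hε
  have hε0 : 0 ≤ ε := by positivity
  have hints : ∀ i : Fin r,
      |∫ t in (((c - r + 1 : ℤ) : ℝ) + i - 1/2)..(((c - r + 1 : ℤ) : ℝ) + i + 1/2),
        pB.eval t| ≤ ε := by
    intro i
    set m : ℤ := c - r + 1 + i with hm
    have hmmem : m ∈ Finset.Icc (c - r + 1) c := by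
      rw [Finset.mem_Icc]
      have : (i : ℤ) ≤ (r : ℤ) - 1 := by
        have := i.isLt; omega
      omega
    have hevalB : ∀ t : ℝ, pB.eval t = (W - T).eval (h * t + z) := by
      intro t; rw [hpB, Polynomial.eval_comp]; simp
    have hchg : (∫ t in (((c - r + 1 : ℤ) : ℝ) + i - 1/2)..(((c - r + 1 : ℤ) : ℝ) + i + 1/2),
        pB.eval t)
        = h⁻¹ * ∫ t in (z + (m : ℝ) * h - h / 2)..(z + (m : ℝ) * h + h / 2), (W - T).eval t := by
      rw [intervalIntegral.integral_congr (g := fun t => (W - T).eval (h * t + z))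
        (fun t _ => hevalB t)]
      rw [intervalIntegral.integral_comp_mul_add (fun u => (W - T).eval u) h0.ne' z]
      rw [smul_eq_mul]
      have e1 : h * (((c - (r:ℤ) + 1 : ℤ) : ℝ) + (i:ℝ) - 1/2) + z = z + (m : ℝ) * h - h / 2 := by
        push_cast [hm]; ring
      have e2 : h * (((c - (r:ℤ) + 1 : ℤ) : ℝ) + (i:ℝ) + 1/2) + z = z + (m : ℝ) * h + h / 2 := by
        push_cast [hm]; ring
      rw [e1, e2]
    rw [hchg, abs_mul, abs_of_nonneg (inv_nonneg.mpr h0.le)]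
    calc h⁻¹ * |∫ t in (z + (m : ℝ) * h - h / 2)..(z + (m : ℝ) * h + h / 2), (W - T).eval t|
        ≤ h⁻¹ * (M * ((r : ℝ) * h) ^ r * h) := by
          apply mul_le_mul_of_nonneg_left (hcell m hmmem) (inv_nonneg.mpr h0.le)
      _ = ε := by rw [hε]; field_simp; ring
  have hcoeffs : ∀ n : Fin r, |pB.coeff n| ≤ CW * ε := hCW pB hpBdeg ε hε0 hints
  -- evaluate
  set t : ℝ := (x - z) / h with htdef
  have hht : |t| ≤ (r : ℝ) := by
    have hxz : |x - z| ≤ h / 2 := by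
      rw [abs_le]; constructor <;> [linarith [hx.1]; linarith [hx.2]]
    rw [htdef, abs_div, abs_of_nonneg h0.le, div_le_iff₀ h0]
    have hr1 : (1 : ℝ) ≤ (r : ℝ) := Nat.one_le_cast.mpr hr
    nlinarith
  have hbd := aux_eval_deriv_bound r ℓ hr pB hpBdeg (CW * ε) hcoeffs t hht
  have hrel : (derivative^[ℓ] pB).eval t = h ^ ℓ * (derivative^[ℓ] (W - T)).eval x := by
    rw [hpB, aux_iterate_derivative_comp_linear h z (W - T) ℓ]
    rw [Polynomial.eval_mul, Polynomial.eval_C, Polynomial.eval_comp]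
    congr 2
    simp only [Polynomial.eval_add, Polynomial.eval_mul, Polynomial.eval_C, Polynomial.eval_X]
    rw [htdef]; field_simp; ring
  rw [hrel, abs_mul, abs_of_nonneg (pow_nonneg h0.le ℓ)] at hbd
  have hKdef : auxK r ℓ = ∑ n ∈ Finset.range r, ((n + ℓ).descFactorial ℓ : ℝ) * (r : ℝ) ^ n := rfl
  rw [← hKdef] at hbd
  have hKε : auxK r ℓ * (CW * ε) = auxK r ℓ * CW * M * (r:ℝ)^r * h ^ r := by
    rw [hε]; ring
  rw [hKε] at hbd
  have hpow : h ^ (r - ℓ) = h ^ r * (h ^ ℓ)⁻¹ := pow_sub₀ h h0.ne' hℓ.le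
  have hhℓ : (0:ℝ) < h ^ ℓ := pow_pos h0 ℓ
  rw [hpow]
  have hmul : |(derivative^[ℓ] (W - T)).eval x| * h ^ ℓ ≤ auxK r ℓ * CW * M * (r:ℝ)^r * h ^ r := by
    rw [mul_comm]; exact hbd
  have hdiv := (le_div_iff₀ hhℓ).mpr hmul
  calc |(derivative^[ℓ] (W - T)).eval x|
      ≤ (auxK r ℓ * CW * M * (r:ℝ)^r * h ^ r) / h ^ ℓ := hdiv
    _ = auxK r ℓ * CW * M * (r:ℝ)^r * (h ^ r * (h ^ ℓ)⁻¹) := by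
        rw [div_eq_mul_inv]; ring

/-- Let `P h` (= p_k) and `Q h` (= p_j) be the cell-average reconstruction
polynomials of degree `≤ r-1` on two substencils (offsets `{k-r+1,…,k}` and `{j₀-r+1,…,j₀}`
relative to the central node `z = x_i`) of an equispaced grid of spacing `h`, reproducing the
cell averages of a smooth function `g`.  Then for each `ℓ ≥ 0`,
`P^{(ℓ)}(x) - Q^{(ℓ)}(x) = O(h^{r-ℓ})` uniformly for `x` in the central cell
`[z - h/2, z + h/2]`. -/
theorem reconstruction_polynomial_derivative_difference
    (g : ℝ → ℝ) (hg : ContDiff ℝ (⊤ : ℕ∞) g)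
    (r : ℕ) (hr : 1 ≤ r) (z : ℝ) (k j₀ : ℤ)
    (hk : k ∈ Finset.Icc (0 : ℤ) ((r : ℤ) - 1)) (hj : j₀ ∈ Finset.Icc (0 : ℤ) ((r : ℤ) - 1))
    (P Q : ℝ → Polynomial ℝ)
    (hPdeg : ∀ h : ℝ, 0 < h → (P h).degree ≤ (r - 1 : ℕ))
    (hQdeg : ∀ h : ℝ, 0 < h → (Q h).degree ≤ (r - 1 : ℕ))
    (hPavg : ∀ h : ℝ, 0 < h → ∀ m ∈ Finset.Icc (k - r + 1) k,
      (1 / h) * ∫ x in (z + (m : ℝ) * h - h / 2)..(z + (m : ℝ) * h + h / 2), (P h).eval x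
        = (1 / h) * ∫ x in (z + (m : ℝ) * h - h / 2)..(z + (m : ℝ) * h + h / 2), g x)
    (hQavg : ∀ h : ℝ, 0 < h → ∀ m ∈ Finset.Icc (j₀ - r + 1) j₀,
      (1 / h) * ∫ x in (z + (m : ℝ) * h - h / 2)..(z + (m : ℝ) * h + h / 2), (Q h).eval x
        = (1 / h) * ∫ x in (z + (m : ℝ) * h - h / 2)..(z + (m : ℝ) * h + h / 2), g x) :
    ∀ ℓ : ℕ, ∃ C : ℝ, ∃ h₀ > 0, ∀ h : ℝ, 0 < h → h < h₀ →
      ∀ x ∈ Set.Icc (z - h / 2) (z + h / 2),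
        |((Polynomial.derivative)^[ℓ] (P h)).eval x
          - ((Polynomial.derivative)^[ℓ] (Q h)).eval x| ≤ C * h ^ (r - ℓ) := by
  intro ℓ
  have hg' : ContDiff ℝ (⊤ : ℕ∞) g := hg.of_le (by simp)
  by_cases hcase : ℓ < r
  · -- main case
    obtain ⟨M₀, hM₀⟩ := (isCompact_Icc (a := z - (r:ℝ)) (b := z + (r:ℝ))).exists_bound_of_continuousOn
      ((hg.continuous_iteratedDeriv r (by exact_mod_cast le_top)).continuousOn)
    set M : ℝ := max M₀ 0 with hMdef
    have hM0 : (0:ℝ) ≤ M := le_max_right _ _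
    set T : Polynomial ℝ := auxT g z r with hT
    have hTdeg : T.natDegree ≤ r - 1 := auxT_natDegree g z r hr
    obtain ⟨CP, hCP0, hCP⟩ := aux_inverse_bound r hr (k - r + 1)
    obtain ⟨CQ, hCQ0, hCQ⟩ := aux_inverse_bound r hr (j₀ - r + 1)
    refine ⟨auxK r ℓ * CP * M * (r:ℝ)^r + auxK r ℓ * CQ * M * (r:ℝ)^r, 1, one_pos, ?_⟩
    intro h h0 h1 x hx
    have hφ : ContDiff ℝ (⊤ : ℕ∞) (fun x => g x - T.eval x) :=
      hg'.sub (aux_contDiff_eval T)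
    have hTr0 : derivative^[r] T = 0 :=
      Polynomial.iterate_derivative_eq_zero (by omega)
    have htay : ∀ x ∈ Set.Icc (z - (r:ℝ)) (z + (r:ℝ)),
        |g x - T.eval x| ≤ M * |x - z| ^ r := by
      apply aux_taylor_bound _ hφ z (r:ℝ) M r
      · intro i hi
        rw [aux_iteratedDeriv_sub_poly g hg' T i]
        show iteratedDeriv i g z - (derivative^[i] T).eval z = 0
        rw [hT, auxT_deriv_eval g z r i hi, sub_self]
      · intro t ht
        rw [aux_iteratedDeriv_sub_poly g hg' T r]
        show |iteratedDeriv r g t - (derivative^[r] T).eval t| ≤ M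
        rw [hTr0]
        simp only [Polynomial.eval_zero, sub_zero]
        exact le_trans (hM₀ t ht) (le_max_left _ _)
    have hest1 := aux_main_est r ℓ hr hcase z M hM0 T hTdeg g hg.continuous htay
      k hk CP hCP h h0 h1 (P h) (hPdeg h h0) (hPavg h h0) x hx
    have hest2 := aux_main_est r ℓ hr hcase z M hM0 T hTdeg g hg.continuous htay
      j₀ hj CQ hCQ h h0 h1 (Q h) (hQdeg h h0) (hQavg h h0) x hx
    have hsplit : (derivative^[ℓ] (P h)).eval x - (derivative^[ℓ] (Q h)).eval x
        = (derivative^[ℓ] (P h - T)).eval x - (derivative^[ℓ] (Q h - T)).eval x := by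
      rw [Polynomial.iterate_derivative_sub, Polynomial.iterate_derivative_sub,
        Polynomial.eval_sub, Polynomial.eval_sub]
      ring
    rw [hsplit]
    calc |(derivative^[ℓ] (P h - T)).eval x - (derivative^[ℓ] (Q h - T)).eval x|
        ≤ |(derivative^[ℓ] (P h - T)).eval x| + |(derivative^[ℓ] (Q h - T)).eval x| :=
          abs_sub _ _
      _ ≤ auxK r ℓ * CP * M * (r:ℝ)^r * h ^ (r - ℓ)
            + auxK r ℓ * CQ * M * (r:ℝ)^r * h ^ (r - ℓ) := add_le_add hest1 hest2
      _ = (auxK r ℓ * CP * M * (r:ℝ)^r + auxK r ℓ * CQ * M * (r:ℝ)^r) * h ^ (r - ℓ) := by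
          ring
  · -- trivial case ℓ ≥ r
    refine ⟨0, 1, one_pos, ?_⟩
    intro h h0 h1 x hx
    have hP0 : derivative^[ℓ] (P h) = 0 :=
      Polynomial.iterate_derivative_eq_zero
        (lt_of_le_of_lt (Polynomial.natDegree_le_iff_degree_le.mpr (hPdeg h h0)) (by omega))
    have hQ0 : derivative^[ℓ] (Q h) = 0 :=
      Polynomial.iterate_derivative_eq_zero
        (lt_of_le_of_lt (Polynomial.natDegree_le_iff_degree_le.mpr (hQdeg h h0)) (by omega))
    rw [hP0, hQ0]
    simp
end

section
/- Define WENO weights ω_k = α_k / ∑_l α_l with α_k = c_k / (I_k + ε)^m, where ε = λ h², λ > 0, and m = ⌈r/2⌉. If all substencils lie in a smoothness region, so that I_k - I_j = O(h^{r+1}) and I_k = O(h²) with I_k + ε bounded below by a positive multiple of h², then ω_k = c_k (1 + O(h^{r-1})) for every k; if the k-th substencil crosses a discontinuity (I_k bounded below away from 0) while some other substencil is smooth (I_j = O(h²)), then ω_k = O(h^{r-1}). -/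
/-!
Write `d_l = I_l + ε` and `α_l = c_l / d_l ^ m`. Because `∑ c_l = 1`,
`ω_k / c_k - 1 = ∑_l c_l (d_k⁻ᵐ - d_l⁻ᵐ) / ∑_l c_l d_l⁻ᵐ`. In a smooth region every `d_l` lies
in `[c₀ h², K h²]`, and `t ↦ t⁻ᵐ` is `m a⁻ᵐ⁻¹`-Lipschitz on `[a, ∞)`, so the numerator is
`O(h^(r+1) / h^(2m+2))` while the denominator is at least `(K h²)⁻ᵐ`; the quotient is
`O(h^(r-1))`. Near a discontinuity, `ω_k ≤ α_k / α_j` for a smooth substencil `j`, and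
`α_k / α_j = O((h² / c₁) ^ m) = O(h^(2m))`, with `2m ≥ r - 1`.
-/

open Finset

theorem abs_inv_pow_sub_inv_pow_le {a x y : ℝ} (ha : 0 < a) (hx : a ≤ x) (hy : a ≤ y) (m : ℕ) :
    |(x ^ m)⁻¹ - (y ^ m)⁻¹| ≤ m * |x - y| / a ^ (m + 1) := by
  have hx0 : 0 < x := ha.trans_le hx
  have hy0 : 0 < y := ha.trans_le hy
  have hinv : |x⁻¹ - y⁻¹| ≤ |x - y| / a ^ 2 := by
    rw [inv_sub_inv hx0.ne' hy0.ne', abs_div, abs_sub_comm, abs_of_pos (mul_pos hx0 hy0), sq]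
    gcongr
  have hmax : max |x⁻¹| |y⁻¹| ≤ a⁻¹ := by
    rw [abs_of_pos (inv_pos.2 hx0), abs_of_pos (inv_pos.2 hy0)]
    exact max_le (inv_anti₀ ha hx) (inv_anti₀ ha hy)
  rcases m with _ | p
  · simp
  calc |(x ^ (p + 1))⁻¹ - (y ^ (p + 1))⁻¹|
      ≤ |x⁻¹ - y⁻¹| * (p + 1 : ℕ) * max |x⁻¹| |y⁻¹| ^ p := by
        simpa only [inv_pow, Nat.add_sub_cancel] using abs_pow_sub_pow_le x⁻¹ y⁻¹ (p + 1)
    _ ≤ |x - y| / a ^ 2 * (p + 1 : ℕ) * a⁻¹ ^ p := by gcongr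
    _ = (p + 1 : ℕ) * |x - y| / a ^ (p + 1 + 1) := by
        rw [inv_pow]
        field_simp
        ring

theorem abs_div_sum_mul_sub_one_le {ι : Type*} {s : Finset ι} {c x : ι → ℝ} {k : ι}
    {L δ : ℝ} (hc : ∀ l ∈ s, 0 ≤ c l) (hcsum : ∑ l ∈ s, c l = 1) (hL : 0 < L)
    (hx : ∀ l ∈ s, L ≤ x l) (hδ : ∀ l ∈ s, |x k - x l| ≤ δ) :
    |x k / ∑ l ∈ s, c l * x l - 1| ≤ δ / L := by
  set S := ∑ l ∈ s, c l * x l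
  have hLS : L ≤ S := calc
    L = ∑ l ∈ s, c l * L := by rw [← sum_mul, hcsum, one_mul]
    _ ≤ S := sum_le_sum fun l hl => mul_le_mul_of_nonneg_left (hx l hl) (hc l hl)
  have hS : 0 < S := hL.trans_le hLS
  have hdev : |x k - S| ≤ δ := calc
    |x k - S| = |∑ l ∈ s, c l * (x k - x l)| := by
        simp only [S, mul_sub, sum_sub_distrib, ← sum_mul, hcsum, one_mul]
    _ ≤ ∑ l ∈ s, c l * δ := by
        refine (abs_sum_le_sum_abs _ _).trans (sum_le_sum fun l hl => ?_)
        rw [abs_mul, abs_of_nonneg (hc l hl)]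
        exact mul_le_mul_of_nonneg_left (hδ l hl) (hc l hl)
    _ = δ := by rw [← sum_mul, hcsum, one_mul]
  calc |x k / S - 1| = |x k - S| / S := by
        rw [div_sub_one hS.ne', abs_div, abs_of_pos hS]
    _ ≤ δ / L := div_le_div₀ ((abs_nonneg _).trans hdev) hdev hL hLS

noncomputable def wenoWeight (c d : ℕ → ℝ) (r m k : ℕ) : ℝ :=
  c k / d k ^ m / ∑ l ∈ range r, c l / d l ^ m

section FixedScale

variable {c d : ℕ → ℝ} {r m k : ℕ}

theorem wenoWeight_nonneg (hc : ∀ l < r, 0 ≤ c l) (hd : ∀ l < r, 0 ≤ d l) (hk : k < r) :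
    0 ≤ wenoWeight c d r m k :=
  div_nonneg (div_nonneg (hc k hk) (pow_nonneg (hd k hk) m)) <| sum_nonneg fun l hl =>
    div_nonneg (hc l (mem_range.1 hl)) (pow_nonneg (hd l (mem_range.1 hl)) m)

theorem wenoWeight_le {j : ℕ} (hc : ∀ l < r, 0 ≤ c l) (hd : ∀ l < r, 0 < d l) (hk : k < r)
    (hj : j < r) (hcj : 0 < c j) :
    wenoWeight c d r m k ≤ c k / c j * (d j / d k) ^ m := by
  have hαj : c j / d j ^ m ≤ ∑ l ∈ range r, c l / d l ^ m :=
    single_le_sum (f := fun l => c l / d l ^ m)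
      (fun l hl => div_nonneg (hc l (mem_range.1 hl)) (pow_nonneg (hd l (mem_range.1 hl)).le m))
      (mem_range.2 hj)
  calc wenoWeight c d r m k ≤ c k / d k ^ m / (c j / d j ^ m) :=
        div_le_div_of_nonneg_left (div_nonneg (hc k hk) (pow_nonneg (hd k hk).le m))
          (div_pos hcj (pow_pos (hd j hj) m)) hαj
    _ = c k / c j * (d j / d k) ^ m := by
        rw [div_pow]
        field_simp

theorem wenoWeight_div_sub_one_le {a B Δ : ℝ} (hc : ∀ l < r, 0 ≤ c l)
    (hcsum : ∑ l ∈ range r, c l = 1) (hk : k < r) (hck : c k ≠ 0) (ha : 0 < a)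
    (hda : ∀ l < r, a ≤ d l) (hdB : ∀ l < r, d l ≤ B) (hΔ : ∀ l < r, |d k - d l| ≤ Δ) :
    |wenoWeight c d r m k / c k - 1| ≤ m * Δ / a ^ (m + 1) * B ^ m := by
  have hdk : 0 < d k := ha.trans_le (hda k hk)
  have hB : 0 < B := hdk.trans_le (hdB k hk)
  have hweight : wenoWeight c d r m k / c k =
      (d k ^ m)⁻¹ / ∑ l ∈ range r, c l * (d l ^ m)⁻¹ := by
    simp only [wenoWeight, div_eq_mul_inv]
    field_simp
  rw [hweight, ← div_inv_eq_mul]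
  refine abs_div_sum_mul_sub_one_le (x := fun l => (d l ^ m)⁻¹) (fun l hl => hc l (mem_range.1 hl)) hcsum
    (inv_pos.2 (pow_pos hB m)) (fun l hl => ?_) (fun l hl => ?_)
  · have hl := mem_range.1 hl
    exact inv_anti₀ (pow_pos (ha.trans_le (hda l hl)) m)
      (pow_le_pow_left₀ (ha.trans_le (hda l hl)).le (hdB l hl) m)
  · have hl := mem_range.1 hl
    calc |(d k ^ m)⁻¹ - (d l ^ m)⁻¹| ≤ m * |d k - d l| / a ^ (m + 1) :=
          abs_inv_pow_sub_inv_pow_le ha (hda k hk) (hda l hl) m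
      _ ≤ m * Δ / a ^ (m + 1) := by gcongr; exact hΔ l hl

end FixedScale

section Asymptotics

variable {r m : ℕ} {lam : ℝ} {c : ℕ → ℝ} {I : ℝ → ℕ → ℝ}

theorem wenoWeight_smooth (hr : 1 ≤ r) (hc : ∀ l < r, 0 ≤ c l)
    (hcsum : ∑ l ∈ range r, c l = 1) {k : ℕ} (hk : k < r) (hck : c k ≠ 0)
    (hdiff : ∃ C : ℝ, ∀ h : ℝ, 0 < h → ∀ k < r, ∀ j < r, |I h k - I h j| ≤ C * h ^ (r + 1))
    (hsmall : ∃ C : ℝ, ∀ h : ℝ, 0 < h → ∀ k < r, I h k ≤ C * h ^ 2)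
    (hlow : ∃ c₀ > 0, ∀ h : ℝ, 0 < h → ∀ k < r, c₀ * h ^ 2 ≤ I h k + lam * h ^ 2) :
    ∃ C : ℝ, ∀ h : ℝ, 0 < h →
      |wenoWeight c (fun l => I h l + lam * h ^ 2) r m k / c k - 1| ≤ C * h ^ (r - 1) := by
  obtain ⟨C₁, hC₁⟩ := hdiff
  obtain ⟨C₂, hC₂⟩ := hsmall
  obtain ⟨c₀, hc₀, hc₀low⟩ := hlow
  refine ⟨m * C₁ / c₀ ^ (m + 1) * (C₂ + lam) ^ m, fun h hh => ?_⟩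
  calc _ ≤ m * (C₁ * h ^ (r + 1)) / (c₀ * h ^ 2) ^ (m + 1) * ((C₂ + lam) * h ^ 2) ^ m :=
        wenoWeight_div_sub_one_le hc hcsum hk hck (by positivity) (hc₀low h hh)
          (fun l hl => by linarith [hC₂ h hh l hl, add_mul C₂ lam (h ^ 2)])
          (fun l hl => by rw [add_sub_add_right_eq_sub]; exact hC₁ h hh k hk l hl)
    _ = m * C₁ / c₀ ^ (m + 1) * (C₂ + lam) ^ m * h ^ (r - 1) := by
        obtain ⟨q, rfl⟩ : ∃ q, r = q + 1 := ⟨r - 1, by omega⟩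
        rw [mul_pow, mul_pow, ← pow_mul, ← pow_mul, Nat.add_sub_cancel]
        field_simp
        ring

theorem wenoWeight_discontinuous (hm : r - 1 ≤ 2 * m) (hlam : 0 < lam) (hc : ∀ l < r, 0 ≤ c l)
    (hI : ∀ h : ℝ, 0 < h → ∀ l < r, 0 ≤ I h l) {k j : ℕ} (hk : k < r) (hj : j < r)
    (hcj : 0 < c j) (hIk : ∃ c₁ > 0, ∃ h₁ > 0, ∀ h : ℝ, 0 < h → h < h₁ → c₁ ≤ I h k)
    (hIj : ∃ C : ℝ, ∀ h : ℝ, 0 < h → I h j ≤ C * h ^ 2) :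
    ∃ C : ℝ, ∃ h₀ > 0, ∀ h : ℝ, 0 < h → h < h₀ →
      |wenoWeight c (fun l => I h l + lam * h ^ 2) r m k| ≤ C * h ^ (r - 1) := by
  obtain ⟨c₁, hc₁, h₁, hh₁, hc₁k⟩ := hIk
  obtain ⟨C, hC⟩ := hIj
  refine ⟨c k / c j * ((C + lam) / c₁) ^ m, min h₁ 1, lt_min hh₁ one_pos, fun h hh hh₀ => ?_⟩
  have hd : ∀ l < r, 0 < I h l + lam * h ^ 2 := fun l hl => by
    have := hI h hh l hl; positivity
  have hdk : c₁ ≤ I h k + lam * h ^ 2 := by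
    linarith [hc₁k h hh (hh₀.trans_le (min_le_left _ _)), show 0 < lam * h ^ 2 by positivity]
  have hdj : I h j + lam * h ^ 2 ≤ (C + lam) * h ^ 2 := by linarith [hC h hh, add_mul C lam (h ^ 2)]
  have hCl : 0 ≤ C + lam := nonneg_of_mul_nonneg_left ((hd j hj).le.trans hdj) (by positivity)
  have hck := hc k hk
  rw [abs_of_nonneg (wenoWeight_nonneg hc (fun l hl => (hd l hl).le) hk)]
  calc _ ≤ c k / c j * ((I h j + lam * h ^ 2) / (I h k + lam * h ^ 2)) ^ m :=
        wenoWeight_le hc hd hk hj hcj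
    _ ≤ c k / c j * ((C + lam) * h ^ 2 / c₁) ^ m := by
        gcongr
        exact div_nonneg (hd j hj).le (hd k hk).le
    _ = c k / c j * ((C + lam) / c₁) ^ m * h ^ (2 * m) := by
        rw [mul_div_right_comm, mul_pow, ← pow_mul]
        ring
    _ ≤ c k / c j * ((C + lam) / c₁) ^ m * h ^ (r - 1) := by
        exact mul_le_mul_of_nonneg_left
          (pow_le_pow_of_le_one hh.le (hh₀.le.trans (min_le_right _ _)) hm) (by positivity)

end Asymptotics

/-- WENO weights `ω_k = α_k / ∑_l α_l` with `α_k = c_k / (I_k + ε)^m`,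
`ε = λ h²` (`λ > 0`), `m = ⌈r/2⌉`.
(a) If all substencils lie in a smoothness region, so that `I_k - I_j = O(h^{r+1})`,
`I_k = O(h²)` and `I_k + ε` is bounded below by a positive multiple of `h²`, then
`ω_k = c_k (1 + O(h^{r-1}))` for every `k`.
(b) If the `k`-th substencil crosses a discontinuity (`I_k` bounded below away from `0`)
while some other substencil is smooth (`I_j = O(h²)`), then `ω_k = O(h^{r-1})`. -/
theorem weno_weight_asymptotics
    (r : ℕ) (hr : 2 ≤ r) (m : ℕ) (hm : m = (r + 1) / 2)
    (lam : ℝ) (hlam : 0 < lam)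
    (c : ℕ → ℝ) (hc : ∀ k < r, 0 < c k ∧ c k < 1)
    (hcsum : ∑ k ∈ Finset.range r, c k = 1)
    (I : ℝ → ℕ → ℝ) (hInonneg : ∀ h : ℝ, 0 < h → ∀ k < r, 0 ≤ I h k)
    (ω : ℝ → ℕ → ℝ)
    (hω : ∀ h : ℝ, 0 < h → ∀ k : ℕ, ω h k =
      (c k / (I h k + lam * h ^ 2) ^ m) /
        ∑ l ∈ Finset.range r, c l / (I h l + lam * h ^ 2) ^ m) :
    ((∃ C : ℝ, ∀ h : ℝ, 0 < h → ∀ k < r, ∀ j < r, |I h k - I h j| ≤ C * h ^ (r + 1)) →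
     (∃ C : ℝ, ∀ h : ℝ, 0 < h → ∀ k < r, I h k ≤ C * h ^ 2) →
     (∃ c₀ > 0, ∀ h : ℝ, 0 < h → ∀ k < r, c₀ * h ^ 2 ≤ I h k + lam * h ^ 2) →
     ∀ k < r, ∃ C : ℝ, ∃ h₀ > 0, ∀ h : ℝ, 0 < h → h < h₀ →
       |ω h k / c k - 1| ≤ C * h ^ (r - 1)) ∧
    (∀ k < r,
      (∃ c₁ > 0, ∃ h₁ > 0, ∀ h : ℝ, 0 < h → h < h₁ → c₁ ≤ I h k) →
      (∃ j < r, j ≠ k ∧ ∃ C : ℝ, ∀ h : ℝ, 0 < h → I h j ≤ C * h ^ 2) →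
      ∃ C : ℝ, ∃ h₀ > 0, ∀ h : ℝ, 0 < h → h < h₀ →
        |ω h k| ≤ C * h ^ (r - 1)) := by
  have hc' : ∀ l < r, 0 ≤ c l := fun l hl => (hc l hl).1.le
  refine ⟨fun hdiff hsmall hlow k hk => ?_, fun k hk hIk ⟨j, hj, _, hIj⟩ => ?_⟩
  · obtain ⟨C, hC⟩ := wenoWeight_smooth (m := m) (by omega) hc' hcsum hk (hc k hk).1.ne'
      hdiff hsmall hlow
    exact ⟨C, 1, one_pos, fun h hh _ => by rw [hω h hh k]; exact hC h hh⟩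
  · obtain ⟨C, h₀, hh₀, hC⟩ := wenoWeight_discontinuous (m := m) (by omega) hlam hc' hInonneg hk hj
      (hc j hj).1 hIk hIj
    exact ⟨C, h₀, hh₀, fun h hh hh' => by rw [hω h hh k]; exact hC h hh hh'⟩
end

section
/- Suppose a_k = A + b_k h^{p} + O(h^{p+1}) for k = 0, ..., r-1 with ∑_k c_k b_k = B h^{q-p} + O(h^{q-p+1}) arranged so that ∑_k c_k a_k = A + O(h^{q}), and suppose weights ω_k satisfy ∑_k ω_k = 1 and ω_k - c_k = O(h^{p}). Then ∑_k ω_k a_k = A + O(h^{min(2p, q)}). -/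
/-!
Since `∑ ω_k = ∑ c_k = 1`, the error splits as
`∑ ω_k a_k - A = ∑ (ω_k - c_k)(a_k - A) + (∑ c_k a_k - A)`.
Each `a_k - A` is `O(h^p)` because the `b_k` are bounded, so each product is `O(h^p · h^p)`,
while the last term is `O(h^q)` by assumption; both are `O(h^{min(2p,q)})` as `h → 0⁺`.
-/

open Asymptotics Filter Topology

theorem Finset.sum_mul_sub_eq_sum_sub_mul_sub_add {ι R : Type*} [CommRing R] (s : Finset ι)
    (ω c a : ι → R) (A : R) (hω : ∑ k ∈ s, ω k = 1) (hc : ∑ k ∈ s, c k = 1) :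
    ∑ k ∈ s, ω k * a k - A = ∑ k ∈ s, (ω k - c k) * (a k - A) + (∑ k ∈ s, c k * a k - A) := by
  simp only [sub_mul, mul_sub, Finset.sum_sub_distrib, ← Finset.sum_mul, hω, hc]
  ring

theorem isBigO_pow_pow_nhds_zero_of_le {𝕜 : Type*} [NormedDivisionRing 𝕜] {m n : ℕ}
    (h : m ≤ n) : (fun x : 𝕜 => x ^ n) =O[𝓝 0] fun x => x ^ m := by
  rcases h.eq_or_lt with rfl | hlt
  · exact isBigO_refl _ _
  · exact (isLittleO_pow_pow hlt).isBigO

theorem isBigO_pow_nhdsGT_zero_of_abs_le {f : ℝ → ℝ} {n : ℕ}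
    (hf : ∃ C, ∀ h : ℝ, 0 < h → |f h| ≤ C * h ^ n) : f =O[𝓝[>] 0] fun h => h ^ n := by
  obtain ⟨C, hC⟩ := hf
  refine IsBigO.of_bound C (eventually_nhdsWithin_of_forall fun h (hh : 0 < h) => ?_)
  simpa only [Real.norm_eq_abs, abs_pow, abs_of_pos hh] using hC h hh

theorem exists_abs_le_of_isBigO_pow_nhdsGT_zero {f : ℝ → ℝ} {n : ℕ}
    (hf : f =O[𝓝[>] 0] fun h => h ^ n) :
    ∃ C : ℝ, ∃ h₀ > 0, ∀ h : ℝ, 0 < h → h < h₀ → |f h| ≤ C * h ^ n := by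
  obtain ⟨C, hC⟩ := hf.bound
  obtain ⟨h₀, hh₀, hbound⟩ := Metric.eventually_nhds_iff.mp (eventually_nhdsWithin_iff.mp hC)
  refine ⟨C, h₀, hh₀, fun h hh hlt => ?_⟩
  have hdist : dist h 0 < h₀ := by rwa [Real.dist_0_eq_abs, abs_of_pos hh]
  simpa only [Real.norm_eq_abs, abs_pow, abs_of_pos hh] using hbound hdist hh

theorem isBigO_pow_nhdsGT_zero_of_sub_mul_pow {f b : ℝ → ℝ} {p : ℕ}
    (hb : ∃ M, ∀ h : ℝ, 0 < h → |b h| ≤ M)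
    (hf : ∃ C, ∀ h : ℝ, 0 < h → |f h - b h * h ^ p| ≤ C * h ^ (p + 1)) :
    f =O[𝓝[>] 0] fun h => h ^ p := by
  have hrem := (isBigO_pow_nhdsGT_zero_of_abs_le hf).trans
    ((isBigO_pow_pow_nhds_zero_of_le p.le_succ).mono nhdsWithin_le_nhds)
  have hb' : b =O[𝓝[>] 0] fun _ => (1 : ℝ) := by
    simpa using isBigO_pow_nhdsGT_zero_of_abs_le (n := 0) (by simpa using hb)
  have hprod := hb'.mul (isBigO_refl (fun h : ℝ => h ^ p) _)
  simp only [one_mul] at hprod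
  exact (hrem.add hprod).congr_left fun h => sub_add_cancel _ _

theorem abstract_weno_accuracy_general
    (r p q : ℕ)
    (c : ℕ → ℝ) (hcsum : ∑ k ∈ Finset.range r, c k = 1)
    (A B : ℝ → ℝ) (b : ℝ → ℕ → ℝ)
    (hbound : ∃ M : ℝ, ∀ h : ℝ, 0 < h → |B h| ≤ M ∧ ∀ k < r, |b h k| ≤ M)
    (a : ℝ → ℕ → ℝ)
    (ha : ∃ C : ℝ, ∀ h : ℝ, 0 < h → ∀ k < r,
      |a h k - A h - b h k * h ^ p| ≤ C * h ^ (p + 1))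
    (harr : ∃ C : ℝ, ∀ h : ℝ, 0 < h →
      |(∑ k ∈ Finset.range r, c k * a h k) - A h| ≤ C * h ^ q)
    (ω : ℝ → ℕ → ℝ)
    (hωsum : ∀ h : ℝ, 0 < h → ∑ k ∈ Finset.range r, ω h k = 1)
    (hωc : ∃ C : ℝ, ∀ h : ℝ, 0 < h → ∀ k < r, |ω h k - c k| ≤ C * h ^ p) :
    ∃ C : ℝ, ∃ h₀ > 0, ∀ h : ℝ, 0 < h → h < h₀ →
      |(∑ k ∈ Finset.range r, ω h k * a h k) - A h| ≤ C * h ^ (min (2 * p) q) := by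
  obtain ⟨M, hM⟩ := hbound
  obtain ⟨Ca, hCa⟩ := ha
  obtain ⟨Cω, hCω⟩ := hωc
  have hdev (k : ℕ) (hk : k ∈ Finset.range r) :
      (fun h => a h k - A h) =O[𝓝[>] 0] fun h => h ^ p :=
    isBigO_pow_nhdsGT_zero_of_sub_mul_pow (b := fun h => b h k)
      ⟨M, fun h hh => (hM h hh).2 k (Finset.mem_range.mp hk)⟩
      ⟨Ca, fun h hh => hCa h hh k (Finset.mem_range.mp hk)⟩
  have hweight (k : ℕ) (hk : k ∈ Finset.range r) :
      (fun h => ω h k - c k) =O[𝓝[>] 0] fun h => h ^ p :=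
    isBigO_pow_nhdsGT_zero_of_abs_le ⟨Cω, fun h hh => hCω h hh k (Finset.mem_range.mp hk)⟩
  have hcross : (fun h => ∑ k ∈ Finset.range r, (ω h k - c k) * (a h k - A h))
      =O[𝓝[>] 0] fun h => h ^ (2 * p) :=
    IsBigO.fun_sum fun k hk => by
      simpa only [two_mul, pow_add] using (hweight k hk).mul (hdev k hk)
  have hconsistent := isBigO_pow_nhdsGT_zero_of_abs_le harr
  have hmin {n : ℕ} (hn : min (2 * p) q ≤ n) :
      (fun h : ℝ => h ^ n) =O[𝓝[>] 0] fun h => h ^ min (2 * p) q :=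
    (isBigO_pow_pow_nhds_zero_of_le hn).mono nhdsWithin_le_nhds
  refine exists_abs_le_of_isBigO_pow_nhdsGT_zero <|
    ((hcross.trans (hmin (min_le_left _ _))).add
      (hconsistent.trans (hmin (min_le_right _ _)))).congr' ?_ EventuallyEq.rfl
  filter_upwards [self_mem_nhdsWithin] with h hh
  exact (Finset.sum_mul_sub_eq_sum_sub_mul_sub_add _ _ _ _ _ (hωsum h hh) hcsum).symm

/-- abstract WENO accuracy lemma: Suppose
`a_k(h) = A(h) + b_k(h) h^p + O(h^{p+1})` for `k = 0, …, r-1`, with `b_k, B` bounded and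
`∑_k c_k b_k(h) = B(h) h^{q-p} + O(h^{q-p+1})`, arranged so that
`∑_k c_k a_k(h) = A(h) + O(h^q)`; and suppose the weights `ω_k(h)` satisfy `∑_k ω_k = 1`
and `ω_k - c_k = O(h^p)`.  Then `∑_k ω_k a_k(h) = A(h) + O(h^{min(2p, q)})`. -/
theorem abstract_weno_accuracy
    (r p q : ℕ) (hr : 1 ≤ r) (hp : 1 ≤ p) (hpq : p ≤ q)
    (c : ℕ → ℝ) (hc : ∀ k < r, 0 < c k) (hcsum : ∑ k ∈ Finset.range r, c k = 1)
    (A B : ℝ → ℝ) (b : ℝ → ℕ → ℝ)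
    (hbound : ∃ M : ℝ, ∀ h : ℝ, 0 < h → |B h| ≤ M ∧ ∀ k < r, |b h k| ≤ M)
    (a : ℝ → ℕ → ℝ)
    (ha : ∃ C : ℝ, ∀ h : ℝ, 0 < h → ∀ k < r,
      |a h k - A h - b h k * h ^ p| ≤ C * h ^ (p + 1))
    (hb : ∃ C : ℝ, ∀ h : ℝ, 0 < h →
      |(∑ k ∈ Finset.range r, c k * b h k) - B h * h ^ (q - p)| ≤ C * h ^ (q - p + 1))
    (harr : ∃ C : ℝ, ∀ h : ℝ, 0 < h →
      |(∑ k ∈ Finset.range r, c k * a h k) - A h| ≤ C * h ^ q)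
    (ω : ℝ → ℕ → ℝ)
    (hωsum : ∀ h : ℝ, 0 < h → ∑ k ∈ Finset.range r, ω h k = 1)
    (hωc : ∃ C : ℝ, ∀ h : ℝ, 0 < h → ∀ k < r, |ω h k - c k| ≤ C * h ^ p) :
    ∃ C : ℝ, ∃ h₀ > 0, ∀ h : ℝ, 0 < h → h < h₀ →
      |(∑ k ∈ Finset.range r, ω h k * a h k) - A h| ≤ C * h ^ (min (2 * p) q) :=
  abstract_weno_accuracy_general r p q c hcsum A B b hbound a ha harr ω hωsum hωc
end
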